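/- Let γ : I → ℝ^{n+2} be a C² unit-speed curve with small acceleration in ℍ^{n+1}, let y₀ ∈ ℍ^{n+1}, and let t₀ be an interior point of I with ⟨γ'(t₀), y₀⟩ = 0 and γ(t₀) ≠ y₀. Then ⟨γ''(t₀), y₀⟩ < 0; consequently, the function t ↦ ⟨γ(t), y₀⟩ has a strict local maximum at every such critical point, and in particular it has no interior local minimum at a parameter where γ ≠ y₀. -/

import Mathlib

/-!
Differentiating `⟨γ, γ⟩ = -1` twice gives `⟨γ'', γ⟩ = -⟨γ', γ'⟩ = -1`, hence
`⟨γ'', γ''⟩ = ⟨γ'' - γ, γ'' - γ⟩ - 1 < 0`: small acceleration makes `γ''` timelike, and it is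
future-directed because it pairs negatively with the future-directed `γ`. Two future-directed
timelike vectors pair negatively (Cauchy–Schwarz on the spatial parts), so `⟨γ'', y₀⟩ < 0`, and
the strict second derivative test turns every critical point of `t ↦ ⟨γ t, y₀⟩` into a strict
local maximum.
-/

open scoped Topology

/-- The Minkowski bilinear form on `ℝ^{n+2}`:
`⟨x,y⟩ = x₁y₁ + ⋯ + x_{n+1}y_{n+1} − x_{n+2}y_{n+2}`. -/
noncomputable def mink (n : ℕ) (x y : Fin (n + 2) → ℝ) : ℝ :=
  (∑ i : Fin (n + 1), x i.castSucc * y i.castSucc) -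
    x (Fin.last (n + 1)) * y (Fin.last (n + 1))

open Filter Set

section SecondDerivativeTest

variable {f f' : ℝ → ℝ} {x₀ : ℝ}

lemma eventually_nhdsLT_lt_of_deriv_pos (hf : ∀ᶠ x in 𝓝 x₀, HasDerivAt f (f' x) x)
    (hpos : ∀ᶠ x in 𝓝[<] x₀, 0 < f' x) : ∀ᶠ x in 𝓝[<] x₀, f x < f x₀ := by
  obtain ⟨l, hl, hsub⟩ :=
    mem_nhdsLT_iff_exists_Ioo_subset.1 ((eventually_nhdsWithin_of_eventually_nhds hf).and hpos)
  have hmono : StrictMonoOn f (Ioc l x₀) := by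
    refine strictMonoOn_of_hasDerivWithinAt_pos (f' := f') (convex_Ioc l x₀) (fun x hx => ?_)
      (fun x hx => ?_) fun x hx => ?_
    · rcases hx.2.eq_or_lt with rfl | hlt
      · exact hf.self_of_nhds.continuousAt.continuousWithinAt
      · exact (hsub ⟨hx.1, hlt⟩).1.continuousAt.continuousWithinAt
    · rw [interior_Ioc] at hx ⊢
      exact (hsub hx).1.hasDerivWithinAt
    · rw [interior_Ioc] at hx
      exact (hsub hx).2
  filter_upwards [Ioo_mem_nhdsLT hl] with x hx
  exact hmono ⟨hx.1, hx.2.le⟩ ⟨hl, le_rfl⟩ hx.2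

lemma eventually_nhdsGT_lt_of_deriv_neg (hf : ∀ᶠ x in 𝓝 x₀, HasDerivAt f (f' x) x)
    (hneg : ∀ᶠ x in 𝓝[>] x₀, f' x < 0) : ∀ᶠ x in 𝓝[>] x₀, f x < f x₀ := by
  obtain ⟨u, hu, hsub⟩ :=
    mem_nhdsGT_iff_exists_Ioo_subset.1 ((eventually_nhdsWithin_of_eventually_nhds hf).and hneg)
  have hanti : StrictAntiOn f (Ico x₀ u) := by
    refine strictAntiOn_of_hasDerivWithinAt_neg (f' := f') (convex_Ico x₀ u) (fun x hx => ?_)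
      (fun x hx => ?_) fun x hx => ?_
    · rcases hx.1.eq_or_lt with rfl | hlt
      · exact hf.self_of_nhds.continuousAt.continuousWithinAt
      · exact (hsub ⟨hlt, hx.2⟩).1.continuousAt.continuousWithinAt
    · rw [interior_Ico] at hx ⊢
      exact (hsub hx).1.hasDerivWithinAt
    · rw [interior_Ico] at hx
      exact (hsub hx).2
  filter_upwards [Ioo_mem_nhdsGT hu] with x hx
  exact hanti ⟨le_rfl, hu⟩ ⟨hx.1.le, hx.2⟩ hx.1

lemma eventually_nhdsNE_lt_of_deriv_deriv_neg {a : ℝ}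
    (hf : ∀ᶠ x in 𝓝 x₀, HasDerivAt f (f' x) x) (hcrit : f' x₀ = 0)
    (hf' : HasDerivAt f' a x₀) (ha : a < 0) : ∀ᶠ x in 𝓝[≠] x₀, f x < f x₀ := by
  have hslope : ∀ᶠ x in 𝓝[≠] x₀, f' x / (x - x₀) < 0 := by
    filter_upwards [(hasDerivAt_iff_tendsto_slope.1 hf').eventually (eventually_lt_nhds ha)]
      with x hx
    rwa [slope_def_field, hcrit, sub_zero] at hx
  rw [← nhdsLT_sup_nhdsGT, eventually_sup]
  constructor
  · refine eventually_nhdsLT_lt_of_deriv_pos hf ?_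
    filter_upwards [nhdsLT_le_nhdsNE x₀ hslope, self_mem_nhdsWithin] with x hx (hlt : x < x₀)
    by_contra! hle
    exact hx.not_ge (div_nonneg_of_nonpos hle (sub_neg.2 hlt).le)
  · refine eventually_nhdsGT_lt_of_deriv_neg hf ?_
    filter_upwards [nhdsGT_le_nhdsNE x₀ hslope, self_mem_nhdsWithin] with x hx (hlt : x₀ < x)
    exact neg_of_div_neg_left hx (sub_pos.2 hlt).le

end SecondDerivativeTest

section MinkowskiForm

variable {n : ℕ}

lemma mink_comm (x y : Fin (n + 2) → ℝ) : mink n x y = mink n y x := by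
  simp only [mink, mul_comm]

lemma mink_sub_left (x y z : Fin (n + 2) → ℝ) :
    mink n (x - y) z = mink n x z - mink n y z := by
  simp only [mink, Pi.sub_apply, sub_mul, Finset.sum_sub_distrib]
  ring

lemma mink_sub_right (x y z : Fin (n + 2) → ℝ) :
    mink n x (y - z) = mink n x y - mink n x z := by
  rw [mink_comm, mink_sub_left, mink_comm y, mink_comm z]

lemma mink_neg_left (x y : Fin (n + 2) → ℝ) : mink n (-x) y = -mink n x y := by
  simp only [mink, Pi.neg_apply, neg_mul, Finset.sum_neg_distrib]
  ring

lemma mink_zero_right (x : Fin (n + 2) → ℝ) : mink n x 0 = 0 := by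
  simp [mink]

lemma mink_neg_of_timelike_of_causal {u v : Fin (n + 2) → ℝ}
    (hu : mink n u u < 0) (hu_last : 0 < u (Fin.last (n + 1)))
    (hv : mink n v v ≤ 0) (hv_last : 0 < v (Fin.last (n + 1))) : mink n u v < 0 := by
  have hcs := Finset.sum_mul_sq_le_sq_mul_sq Finset.univ
    (fun i : Fin (n + 1) => u i.castSucc) (fun i => v i.castSucc)
  simp only [mink, ← sq] at hu hv hcs ⊢
  set a := u (Fin.last (n + 1))
  set b := v (Fin.last (n + 1))
  set Su := ∑ i : Fin (n + 1), u i.castSucc ^ 2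
  have hSu : 0 ≤ Su := Finset.sum_nonneg fun i _ => sq_nonneg _
  by_contra! hab
  have : (a * b) ^ 2 < (a * b) ^ 2 := calc
    (a * b) ^ 2 ≤ (∑ i : Fin (n + 1), u i.castSucc * v i.castSucc) ^ 2 := by
      gcongr
      linarith
    _ ≤ Su * ∑ i : Fin (n + 1), v i.castSucc ^ 2 := hcs
    _ ≤ Su * b ^ 2 := by gcongr; linarith
    _ < a ^ 2 * b ^ 2 := by gcongr; linarith
    _ = (a * b) ^ 2 := by ring
  exact this.false

lemma last_pos_of_timelike {v x : Fin (n + 2) → ℝ} (hv : mink n v v < 0)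
    (hx : mink n x x ≤ 0) (hx_last : 0 < x (Fin.last (n + 1))) (hvx : mink n v x < 0) :
    0 < v (Fin.last (n + 1)) := by
  have hv_last : v (Fin.last (n + 1)) ≠ 0 := by
    intro h0
    have : 0 ≤ ∑ i : Fin (n + 1), v i.castSucc * v i.castSucc :=
      Finset.sum_nonneg fun i _ => mul_self_nonneg _
    simp only [mink, h0] at hv
    linarith
  refine hv_last.lt_or_gt.resolve_left fun hneg => hvx.not_ge ?_
  have hnv : mink n (-v) (-v) < 0 := by rwa [mink_neg_left, mink_comm, mink_neg_left, neg_neg]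
  have := mink_neg_of_timelike_of_causal hnv (by simpa using hneg) hx hx_last
  rw [mink_neg_left] at this
  linarith

lemma mink_neg_of_small_acceleration {x y v : Fin (n + 2) → ℝ}
    (hx : mink n x x = -1) (hx_last : 0 < x (Fin.last (n + 1)))
    (hy : mink n y y = -1) (hy_last : 0 < y (Fin.last (n + 1)))
    (hvx : mink n v x = -1) (hacc : mink n (v - x) (v - x) < 1) : mink n v y < 0 := by
  have hvv : mink n v v < 0 := by
    rw [mink_sub_left, mink_sub_right, mink_sub_right, mink_comm x v, hvx, hx] at hacc
    linarith
  have hv_last := last_pos_of_timelike hvv (by linarith) hx_last (by linarith)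
  exact mink_neg_of_timelike_of_causal hvv hv_last (by linarith) hy_last

end MinkowskiForm

section MinkowskiCalculus

variable {n : ℕ}

lemma hasDerivAt_mink {u v : ℝ → Fin (n + 2) → ℝ} {u' v' : Fin (n + 2) → ℝ} {t : ℝ}
    (hu : HasDerivAt u u' t) (hv : HasDerivAt v v' t) :
    HasDerivAt (fun s => mink n (u s) (v s)) (mink n u' (v t) + mink n (u t) v') t := by
  have hu_i := hasDerivAt_pi.1 hu
  have hv_i := hasDerivAt_pi.1 hv
  refine ((HasDerivAt.fun_sum (u := Finset.univ) fun (i : Fin (n + 1)) _ =>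
    (hu_i i.castSucc).mul (hv_i i.castSucc)).fun_sub
    ((hu_i (Fin.last (n + 1))).mul (hv_i (Fin.last (n + 1))))).congr_deriv ?_
  simp only [mink, Finset.sum_add_distrib]
  ring

lemma hasDerivAt_mink_const {u : ℝ → Fin (n + 2) → ℝ} {u' : Fin (n + 2) → ℝ} {t : ℝ}
    (hu : HasDerivAt u u' t) (y : Fin (n + 2) → ℝ) :
    HasDerivAt (fun s => mink n (u s) y) (mink n u' y) t := by
  simpa [mink_zero_right] using hasDerivAt_mink hu (hasDerivAt_const t y)

lemma mink_acc_self_eq_neg_speed_sq {γ γ' γ'' : ℝ → Fin (n + 2) → ℝ} {t₀ c : ℝ}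
    (hγ : ∀ᶠ t in 𝓝 t₀, HasDerivAt γ (γ' t) t) (hγ' : ∀ᶠ t in 𝓝 t₀, HasDerivAt γ' (γ'' t) t)
    (hc : ∀ᶠ t in 𝓝 t₀, mink n (γ t) (γ t) = c) :
    mink n (γ'' t₀) (γ t₀) = -mink n (γ' t₀) (γ' t₀) := by
  have horth : ∀ᶠ t in 𝓝 t₀, mink n (γ' t) (γ t) = 0 := by
    filter_upwards [hγ, hc.eventually_nhds] with t ht htc
    have := (hasDerivAt_mink ht ht).unique ((hasDerivAt_const t c).congr_of_eventuallyEq htc)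
    rw [mink_comm (γ t)] at this
    linarith
  have := (hasDerivAt_mink hγ'.self_of_nhds hγ.self_of_nhds).unique
    ((hasDerivAt_const t₀ (0 : ℝ)).congr_of_eventuallyEq horth)
  linarith

end MinkowskiCalculus

theorem small_acceleration_no_interior_min_general
    (n : ℕ) (I : Set ℝ)
    (γ γ' γ'' : ℝ → Fin (n + 2) → ℝ)
    (hd1 : ∀ t ∈ I, HasDerivWithinAt γ (γ' t) I t)
    (hd2 : ∀ t ∈ I, HasDerivWithinAt γ' (γ'' t) I t)
    (hhyp : ∀ t ∈ I, mink n (γ t) (γ t) = -1)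
    (hpos : ∀ t ∈ I, 0 < γ t (Fin.last (n + 1)))
    (hspeed : ∀ t ∈ I, mink n (γ' t) (γ' t) = 1)
    (hacc : ∀ t ∈ I, mink n (γ'' t - γ t) (γ'' t - γ t) < 1)
    (y₀ : Fin (n + 2) → ℝ) (hy₀ : mink n y₀ y₀ = -1)
    (hy₀pos : 0 < y₀ (Fin.last (n + 1)))
    (t₀ : ℝ) (ht₀ : t₀ ∈ interior I)
    (hcrit : mink n (γ' t₀) y₀ = 0) :
    mink n (γ'' t₀) y₀ < 0 ∧
    ∀ᶠ t in 𝓝[≠] t₀, mink n (γ t) y₀ < mink n (γ t₀) y₀ := by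
  have hI : I ∈ 𝓝 t₀ := mem_interior_iff_mem_nhds.1 ht₀
  have ht₀I : t₀ ∈ I := mem_of_mem_nhds hI
  have hγ : ∀ᶠ t in 𝓝 t₀, HasDerivAt γ (γ' t) t :=
    (eventually_mem_nhds_iff.2 hI).mono fun t ht => (hd1 t (mem_of_mem_nhds ht)).hasDerivAt ht
  have hγ' : ∀ᶠ t in 𝓝 t₀, HasDerivAt γ' (γ'' t) t :=
    (eventually_mem_nhds_iff.2 hI).mono fun t ht => (hd2 t (mem_of_mem_nhds ht)).hasDerivAt ht
  have hacc_self : mink n (γ'' t₀) (γ t₀) = -1 := by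
    rw [mink_acc_self_eq_neg_speed_sq hγ hγ' (mem_of_superset hI hhyp), hspeed t₀ ht₀I]
  have hneg : mink n (γ'' t₀) y₀ < 0 :=
    mink_neg_of_small_acceleration (hhyp t₀ ht₀I) (hpos t₀ ht₀I) hy₀ hy₀pos hacc_self
      (hacc t₀ ht₀I)
  exact ⟨hneg, eventually_nhdsNE_lt_of_deriv_deriv_neg
    (hγ.mono fun t ht => hasDerivAt_mink_const ht y₀) hcrit
    (hasDerivAt_mink_const hγ'.self_of_nhds y₀) hneg⟩

/-- A unit-speed curve with small acceleration in `ℍ^{n+1}` which is tangent to a metric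
sphere centered at `y₀` at an interior parameter `t₀` (with `γ(t₀) ≠ y₀`) satisfies
`⟨γ''(t₀), y₀⟩ < 0`; consequently `t ↦ ⟨γ(t), y₀⟩` has a strict local maximum at every
such critical point (hence no interior local minimum there). -/
theorem small_acceleration_no_interior_min
    (n : ℕ) (I : Set ℝ) (hI : I.OrdConnected)
    (γ γ' γ'' : ℝ → Fin (n + 2) → ℝ)
    (hd1 : ∀ t ∈ I, HasDerivWithinAt γ (γ' t) I t)
    (hd2 : ∀ t ∈ I, HasDerivWithinAt γ' (γ'' t) I t)
    (hcont : ContinuousOn γ'' I)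
    (hhyp : ∀ t ∈ I, mink n (γ t) (γ t) = -1)
    (hpos : ∀ t ∈ I, 0 < γ t (Fin.last (n + 1)))
    (hspeed : ∀ t ∈ I, mink n (γ' t) (γ' t) = 1)
    (hacc : ∀ t ∈ I, mink n (γ'' t - γ t) (γ'' t - γ t) < 1)
    (y₀ : Fin (n + 2) → ℝ) (hy₀ : mink n y₀ y₀ = -1)
    (hy₀pos : 0 < y₀ (Fin.last (n + 1)))
    (t₀ : ℝ) (ht₀ : t₀ ∈ interior I)
    (hcrit : mink n (γ' t₀) y₀ = 0) (hne : γ t₀ ≠ y₀) :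
    mink n (γ'' t₀) y₀ < 0 ∧
    ∀ᶠ t in 𝓝[≠] t₀, mink n (γ t) y₀ < mink n (γ t₀) y₀ :=
  small_acceleration_no_interior_min_general n I γ γ' γ'' hd1 hd2 hhyp hpos hspeed hacc y₀ hy₀
    hy₀pos t₀ ht₀ hcrit
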